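/- A minimal counterexample to the statement 'every planar graph G satisfies χ'_a(G) ≤ max{Δ(G), 4.2·10^14}' must be 2-connected. -/

import Mathlib

/-- A proper edge-coloring: edges sharing an endpoint get distinct colors. -/
def ProperEdgeColoring {V : Type*} (G : SimpleGraph V) (c : Sym2 V → ℕ) : Prop :=
  ∀ e₁ ∈ G.edgeSet, ∀ e₂ ∈ G.edgeSet, e₁ ≠ e₂ → (∃ v, v ∈ e₁ ∧ v ∈ e₂) → c e₁ ≠ c e₂

/-- The subgraph consisting of edges colored `a` or `b`. -/
def twoColorSubgraph {V : Type*} (G : SimpleGraph V) (c : Sym2 V → ℕ) (a b : ℕ) :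
    SimpleGraph V where
  Adj x y := G.Adj x y ∧ (c s(x, y) = a ∨ c s(x, y) = b)
  symm := by
    constructor
    intro x y h
    refine ⟨h.1.symm, ?_⟩
    rw [Sym2.eq_swap]
    exact h.2
  loopless := by
    constructor
    intro x h
    exact G.irrefl h.1

/-- An acyclic edge-coloring: proper, and any two color classes induce an acyclic graph. -/
def AcyclicEdgeColoring {V : Type*} (G : SimpleGraph V) (c : Sym2 V → ℕ) : Prop :=
  ProperEdgeColoring G c ∧ ∀ a b : ℕ, (twoColorSubgraph G c a b).IsAcyclic

/-- `G` has an acyclic edge-coloring using colors `0, …, k-1`. -/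
def HasAcyclicEdgeColoring {V : Type*} (G : SimpleGraph V) (k : ℕ) : Prop :=
  ∃ c : Sym2 V → ℕ, AcyclicEdgeColoring G c ∧ ∀ e ∈ G.edgeSet, c e < k
/-- `G` contains `H` as a minor: there are disjoint nonempty connected branch sets,
one for each vertex of `H`, with edges of `G` between branch sets of adjacent
vertices of `H`. -/
def HasMinor {V W : Type*} (G : SimpleGraph V) (H : SimpleGraph W) : Prop :=
  ∃ f : W → Set V,
    (∀ w, (f w).Nonempty) ∧
    (∀ w, (G.induce (f w)).Connected) ∧
    (∀ w₁ w₂, w₁ ≠ w₂ → Disjoint (f w₁) (f w₂)) ∧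
    (∀ w₁ w₂, H.Adj w₁ w₂ → ∃ v₁ ∈ f w₁, ∃ v₂ ∈ f w₂, G.Adj v₁ v₂)

/-- Planarity, via Wagner's theorem: no `K₅` minor and no `K₃,₃` minor. -/
def Planar {V : Type*} (G : SimpleGraph V) : Prop :=
  ¬ HasMinor G (⊤ : SimpleGraph (Fin 5)) ∧
  ¬ HasMinor G (completeBipartiteGraph (Fin 3) (Fin 3))

/-- The maximum degree of a finite graph. -/
noncomputable def maxDeg {V : Type*} [Fintype V] (G : SimpleGraph V) : ℕ :=
  Finset.univ.sup fun v => (G.neighborSet v).ncard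

/-!
If `G - v` is disconnected, then `G` splits at `v` into two proper induced subgraphs `G[A]` and
`G[B]` with `A ∪ B = V`, `A ∩ B ⊆ {v}` and no edge between `A \ B` and `B \ A`. Both are planar
with fewer vertices, so by minimality they have acyclic edge colorings with
`max(Δ(G), 4.2·10¹⁴)` colors. Since `deg v ≤ Δ(G)`, the colors of `G[B]` can be permuted so that
at `v` they avoid those used by `G[A]`; every cycle of `G` lies in `A` or in `B`, so the glued
coloring is acyclic, a contradiction. Graphs on at most two vertices are colored by a single
color, and a graph on at least three vertices without cut vertices is connected.
-/

open SimpleGraph Finset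

variable {V W X : Type*} {G : SimpleGraph V} {H : SimpleGraph W} {c c' : Sym2 V → ℕ} {k : ℕ}

theorem properEdgeColoring_iff :
    ProperEdgeColoring G c ↔
      ∀ ⦃u x y⦄, G.Adj u x → G.Adj u y → x ≠ y → c s(u, x) ≠ c s(u, y) := by
  refine ⟨fun h u x y hx hy hxy =>
    h _ hx _ hy (mt Sym2.congr_right.mp hxy) ⟨u, by simp, by simp⟩, ?_⟩
  rintro h e₁ he₁ e₂ he₂ hne ⟨u, hu₁, hu₂⟩
  obtain ⟨x, rfl⟩ := Sym2.mem_iff_exists.mp hu₁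
  obtain ⟨y, rfl⟩ := Sym2.mem_iff_exists.mp hu₂
  exact h he₁ he₂ fun hxy => hne (hxy ▸ rfl)

theorem twoColorSubgraph_le (a b : ℕ) : twoColorSubgraph G c a b ≤ G := fun _ _ h => h.1

theorem twoColorSubgraph_induce (s : Set V) (a b : ℕ) :
    (twoColorSubgraph G c a b).induce s =
      twoColorSubgraph (G.induce s) (c ∘ Sym2.map Subtype.val) a b := by
  ext; rfl

theorem AcyclicEdgeColoring.congr (hc : AcyclicEdgeColoring G c)
    (h : ∀ e ∈ G.edgeSet, c e = c' e) : AcyclicEdgeColoring G c' := by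
  have hadj : ∀ ⦃x y⦄, G.Adj x y → c s(x, y) = c' s(x, y) := fun x y hxy => h _ hxy
  refine ⟨properEdgeColoring_iff.mpr fun u x y hx hy hxy => ?_, fun a b => ?_⟩
  · rw [← hadj hx, ← hadj hy]
    exact properEdgeColoring_iff.mp hc.1 hx hy hxy
  · convert hc.2 a b using 1
    ext x y
    exact and_congr_right fun hxy => by rw [hadj hxy]

theorem AcyclicEdgeColoring.perm_comp (hc : AcyclicEdgeColoring G c) (σ : Equiv.Perm ℕ) :
    AcyclicEdgeColoring G (σ ∘ c) := by
  refine ⟨fun e₁ he₁ e₂ he₂ hne hshare => σ.injective.ne (hc.1 e₁ he₁ e₂ he₂ hne hshare),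
    fun a b => ?_⟩
  convert hc.2 (σ.symm a) (σ.symm b) using 1
  ext x y
  simp only [twoColorSubgraph, Function.comp_apply, Equiv.eq_symm_apply]

theorem AcyclicEdgeColoring.comap (f : H ↪g G) (hc : AcyclicEdgeColoring G c) :
    AcyclicEdgeColoring H (c ∘ Sym2.map f) := by
  refine ⟨properEdgeColoring_iff.mpr fun u x y hx hy hxy => ?_, fun a b => ?_⟩
  · exact properEdgeColoring_iff.mp hc.1 (f.map_adj_iff.mpr hx) (f.map_adj_iff.mpr hy)
      (f.injective.ne hxy)
  · let φ : twoColorSubgraph H (c ∘ Sym2.map f) a b →g twoColorSubgraph G c a b :=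
      ⟨f, fun h => ⟨f.map_adj_iff.mpr h.1, h.2⟩⟩
    exact (hc.2 a b).comap φ f.injective

theorem HasAcyclicEdgeColoring.of_embedding (f : H ↪g G) (h : HasAcyclicEdgeColoring G k) :
    HasAcyclicEdgeColoring H k := by
  obtain ⟨c, hc, hk⟩ := h
  exact ⟨c ∘ Sym2.map f, hc.comap f, fun e he => hk _ (f.map_mem_edgeSet_iff.mpr he)⟩

theorem HasAcyclicEdgeColoring.mono {k' : ℕ} (h : HasAcyclicEdgeColoring G k) (hk : k ≤ k') :
    HasAcyclicEdgeColoring G k' := by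
  obtain ⟨c, hc, hck⟩ := h
  exact ⟨c, hc, fun e he => (hck e he).trans_le hk⟩

theorem HasAcyclicEdgeColoring.exists_of_induce {s : Set V}
    (h : HasAcyclicEdgeColoring (G.induce s) k) :
    ∃ c : Sym2 V → ℕ, AcyclicEdgeColoring (G.induce s) (c ∘ Sym2.map Subtype.val) ∧
      ∀ e ∈ (G.induce s).edgeSet, c (e.map Subtype.val) < k := by
  obtain ⟨c, hc, hk⟩ := h
  have hinj : Function.Injective (Sym2.map (Subtype.val : s → V)) :=
    Sym2.map.injective Subtype.val_injective
  refine ⟨Function.extend (Sym2.map Subtype.val) c 0, ?_, fun e he => ?_⟩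
  · rwa [Function.extend_comp hinj]
  · rw [hinj.extend_apply]
    exact hk e he

theorem hasAcyclicEdgeColoring_of_card_le_two [Fintype V] (hV : Fintype.card V ≤ 2)
    (hk : 0 < k) : HasAcyclicEdgeColoring G k := by
  classical
  refine ⟨0, ⟨properEdgeColoring_iff.mpr fun u x y hx hy hxy _ => ?_, fun a b => ?_⟩,
    fun _ _ => hk⟩
  · have h3 : #{u, x, y} = 3 := card_eq_three.mpr ⟨u, x, y, hx.ne, hy.ne, hxy, rfl⟩
    have := card_le_univ ({u, x, y} : Finset V)
    omega
  · exact IsAcyclic.of_card_le_two (by simpa [ENat.card_eq_coe_fintype_card] using hV)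

theorem HasMinor.of_embedding {K : SimpleGraph X} (f : H ↪g G) (h : HasMinor H K) :
    HasMinor G K := by
  obtain ⟨B, hne, hconn, hdisj, hadj⟩ := h
  refine ⟨fun w => f '' B w, fun w => (hne w).image f, fun w => ?_,
    fun w₁ w₂ hw => (Set.disjoint_image_iff f.injective).mpr (hdisj w₁ w₂ hw),
    fun w₁ w₂ hw => ?_⟩
  · refine (hconn w).map (induceHom f.toHom (Set.mapsTo_image f (B w))) ?_
    rintro ⟨_, x, hx, rfl⟩
    exact ⟨⟨x, hx⟩, rfl⟩
  · obtain ⟨v₁, h₁, v₂, h₂, hv⟩ := hadj w₁ w₂ hw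
    exact ⟨f v₁, Set.mem_image_of_mem f h₁, f v₂, Set.mem_image_of_mem f h₂,
      f.map_adj_iff.mpr hv⟩

theorem Planar.of_embedding (f : H ↪g G) (hG : Planar G) : Planar H :=
  ⟨fun h => hG.1 (h.of_embedding f), fun h => hG.2 (h.of_embedding f)⟩

theorem ncard_neighborSet_le_maxDeg [Fintype V] (G : SimpleGraph V) (v : V) :
    (G.neighborSet v).ncard ≤ maxDeg G :=
  Finset.le_sup (f := fun v => (G.neighborSet v).ncard) (mem_univ v)

theorem maxDeg_le_of_embedding [Fintype V] [Fintype W] (f : H ↪g G) : maxDeg H ≤ maxDeg G :=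
  Finset.sup_le fun v _ => (Set.ncard_le_ncard_of_injOn f (fun _ hx => f.map_adj_iff.mpr hx)
    f.injective.injOn (Set.toFinite _)).trans (ncard_neighborSet_le_maxDeg G (f v))

theorem exists_perm_separating_colors {N : Finset V} {p : V → Prop} {f g : V → ℕ}
    (hf : ∀ x ∈ N, p x → f x < k) (hg : ∀ y ∈ N, ¬p y → g y < k) (hN : #N ≤ k) :
    ∃ σ : Equiv.Perm ℕ, (∀ i < k, σ i < k) ∧ ∀ x ∈ N, ∀ y ∈ N, p x → ¬p y → f x ≠ σ (g y) := by
  classical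
  set SA := (N.filter p).image f
  set SB := (N.filter (¬p ·)).image g
  have hSA : SA ⊆ range k := by
    simp only [SA, image_subset_iff, mem_filter, mem_range, and_imp]
    exact hf
  have hSB : SB ⊆ range k := by
    simp only [SB, image_subset_iff, mem_filter, mem_range, and_imp]
    exact hg
  have hcard : #SB ≤ #(range k \ SA) := by
    have hSA' : #SA ≤ #(N.filter p) := card_image_le
    have hSB' : #SB ≤ #(N.filter (¬p ·)) := card_image_le
    have := card_filter_add_card_filter_not (s := N) p
    rw [card_sdiff_of_subset hSA, card_range]
    omega
  obtain ⟨T, hT, hTcard⟩ := exists_subset_card_eq hcard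
  let e : {i : range k // i.1 ∈ SB} ≃ {i : range k // i.1 ∈ T} :=
    (Equiv.subtypeSubtypeEquivSubtype fun hi => hSB hi).trans <|
      (SB.equivOfCardEq hTcard.symm).trans
        (Equiv.subtypeSubtypeEquivSubtype fun hi => sdiff_subset (hT hi)).symm
  refine ⟨Equiv.Perm.ofSubtype e.extendSubtype, fun i hi => ?_, fun x hx y hy hpx hpy => ?_⟩
  · rw [Equiv.Perm.ofSubtype_apply_of_mem _ (mem_range.mpr hi)]
    exact mem_range.mp (Subtype.property _)
  · have hgy : g y ∈ SB := mem_image_of_mem _ (mem_filter.mpr ⟨hy, hpy⟩)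
    rw [Equiv.Perm.ofSubtype_apply_of_mem _ (hSB hgy)]
    intro hfx
    exact (mem_sdiff.mp (hT (e.extendSubtype_mem ⟨g y, hSB hgy⟩ hgy))).2
      (hfx ▸ mem_image_of_mem f (mem_filter.mpr ⟨hx, hpx⟩))


theorem SimpleGraph.Walk.IsCycle.induce {u : V} {w : G.Walk u u} (hw : w.IsCycle) {s : Set V}
    (hs : ∀ x ∈ w.support, x ∈ s) : (w.induce s hs).IsCycle :=
  Walk.IsCycle.of_map (f := (Embedding.induce s).toHom) (by rwa [Walk.map_induce])

namespace SimpleGraph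

structure IsSeparation (G : SimpleGraph V) (A B : Set V) (v : V) : Prop where
  union_eq : A ∪ B = Set.univ
  inter_subset : A ∩ B ⊆ {v}
  adj : ∀ ⦃x y⦄, G.Adj x y → (x ∈ A ∧ y ∈ A) ∨ (x ∈ B ∧ y ∈ B)

namespace IsSeparation

variable {A B : Set V} {v : V}

theorem symm (h : G.IsSeparation A B v) : G.IsSeparation B A v :=
  ⟨by rw [Set.union_comm, h.union_eq], by rw [Set.inter_comm]; exact h.inter_subset,
    fun _ _ hxy => (h.adj hxy).symm⟩

theorem anti {G' : SimpleGraph V} (h : G.IsSeparation A B v) (hle : G' ≤ G) :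
    G'.IsSeparation A B v :=
  ⟨h.union_eq, h.inter_subset, fun _ _ hxy => h.adj (hle hxy)⟩

theorem mem_of_adj (h : G.IsSeparation A B v) {x y : V} (hxy : G.Adj x y) (hx : x ∈ A)
    (hxv : x ≠ v) : y ∈ A :=
  (h.adj hxy).elim And.right fun hB => absurd (h.inter_subset ⟨hx, hB.1⟩) hxv

theorem support_subset_of_walk (h : G.IsSeparation A B v) :
    ∀ {x y : V} (p : G.Walk x y), x ∈ A → v ∉ p.support.dropLast → ∀ z ∈ p.support, z ∈ A
  | _, _, .nil, hx, _, z, hz => by rwa [List.mem_singleton.mp hz]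
  | _, _, .cons hxt p, hx, hv, z, hz => by
    rw [Walk.support_cons, List.dropLast_cons_of_ne_nil p.support_ne_nil, List.mem_cons,
      not_or] at hv
    rcases List.mem_cons.mp (Walk.support_cons hxt p ▸ hz) with rfl | hz
    · exact hx
    · exact h.support_subset_of_walk p (h.mem_of_adj hxt hx (Ne.symm hv.1)) hv.2 z hz

theorem isCycle_support_subset (h : G.IsSeparation A B v) {u : V} {w : G.Walk u u}
    (hw : w.IsCycle) : (∀ z ∈ w.support, z ∈ A) ∨ (∀ z ∈ w.support, z ∈ B) := by
  classical
  by_cases hv : v ∈ w.support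
  · simp_rw [← w.mem_support_rotate_iff v hv]
    obtain ⟨t, hvt, q, hq⟩ := Walk.not_nil_iff.mp (hw.rotate hv).not_nil
    have hqpath := ((Walk.cons_isCycle_iff q hvt).mp (hq ▸ hw.rotate hv)).1
    have hvq : v ∉ q.support.dropLast := by
      have := hqpath.support_nodup
      rw [← q.dropLast_support_concat, List.nodup_append] at this
      exact fun hmem => this.2.2 v hmem v (List.mem_singleton_self v) rfl
    rw [hq, Walk.support_cons]
    rcases h.adj hvt with ⟨hvA, htA⟩ | ⟨hvB, htB⟩
    · exact .inl <| List.forall_mem_cons.mpr ⟨hvA, h.support_subset_of_walk q htA hvq⟩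
    · exact .inr <| List.forall_mem_cons.mpr ⟨hvB, h.symm.support_subset_of_walk q htB hvq⟩
  · have hvw : v ∉ w.support.dropLast := fun hmem => hv (List.dropLast_subset _ hmem)
    rcases (h.union_eq ▸ Set.mem_univ u : u ∈ A ∪ B) with hu | hu
    · exact .inl (h.support_subset_of_walk w hu hvw)
    · exact .inr (h.symm.support_subset_of_walk w hu hvw)

theorem isAcyclic (h : G.IsSeparation A B v) (hA : (G.induce A).IsAcyclic)
    (hB : (G.induce B).IsAcyclic) : G.IsAcyclic := fun _ _ hw =>
  (h.isCycle_support_subset hw).elim (fun hs => hA _ (hw.induce hs))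
    fun hs => hB _ (hw.induce hs)

theorem acyclicEdgeColoring (h : G.IsSeparation A B v)
    (hA : AcyclicEdgeColoring (G.induce A) (c ∘ Sym2.map Subtype.val))
    (hB : AcyclicEdgeColoring (G.induce B) (c ∘ Sym2.map Subtype.val))
    (hv : ∀ ⦃x y⦄, G.Adj v x → G.Adj v y → x ∈ A → y ∉ A → c s(v, x) ≠ c s(v, y)) :
    AcyclicEdgeColoring G c := by
  have hnotMem : ∀ ⦃y⦄, G.Adj v y → y ∈ B → y ∉ A := fun y hvy hyB hyA =>
    hvy.ne (h.inter_subset ⟨hyA, hyB⟩).symm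
  refine ⟨properEdgeColoring_iff.mpr fun u x y hx hy hxy => ?_, fun a b => ?_⟩
  · have hne {s : Set V} (hx : x ∈ s) (hy : y ∈ s) : (⟨x, hx⟩ : s) ≠ ⟨y, hy⟩ :=
      fun h => hxy (congrArg Subtype.val h)
    rcases h.adj hx with ⟨huA, hxA⟩ | ⟨huB, hxB⟩ <;>
      rcases h.adj hy with ⟨huA', hyA⟩ | ⟨huB', hyB⟩
    · exact properEdgeColoring_iff.mp hA.1 (u := ⟨u, huA⟩) (x := ⟨x, hxA⟩) (y := ⟨y, hyA⟩)
        hx hy (hne hxA hyA)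
    · obtain rfl : u = v := h.inter_subset ⟨huA, huB'⟩
      exact hv hx hy hxA (hnotMem hy hyB)
    · obtain rfl : u = v := h.inter_subset ⟨huA', huB⟩
      exact (hv hy hx hyA (hnotMem hx hxB)).symm
    · exact properEdgeColoring_iff.mp hB.1 (u := ⟨u, huB⟩) (x := ⟨x, hxB⟩) (y := ⟨y, hyB⟩)
        hx hy (hne hxB hyB)
  · exact (h.anti (twoColorSubgraph_le a b)).isAcyclic
      (by rw [twoColorSubgraph_induce]; exact hA.2 a b)
      (by rw [twoColorSubgraph_induce]; exact hB.2 a b)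

theorem hasAcyclicEdgeColoring [Fintype V] (h : G.IsSeparation A B v)
    (hdeg : (G.neighborSet v).ncard ≤ k) (hA : HasAcyclicEdgeColoring (G.induce A) k)
    (hB : HasAcyclicEdgeColoring (G.induce B) k) : HasAcyclicEdgeColoring G k := by
  classical
  obtain ⟨c₁, hc₁, hk₁⟩ := hA.exists_of_induce
  obtain ⟨c₂, hc₂, hk₂⟩ := hB.exists_of_induce
  have hvA {x : V} (hvx : G.Adj v x) (hx : x ∈ A) : v ∈ A := h.mem_of_adj hvx.symm hx hvx.ne'
  have hvB {y : V} (hvy : G.Adj v y) (hy : y ∉ A) : y ∈ B ∧ v ∈ B :=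
    have hyB := (h.union_eq ▸ Set.mem_univ y : y ∈ A ∪ B).resolve_left hy
    ⟨hyB, h.symm.mem_of_adj hvy.symm hyB hvy.ne'⟩
  obtain ⟨σ, hσk, hσ⟩ := exists_perm_separating_colors (N := G.neighborFinset v)
    (p := (· ∈ A)) (f := fun x => c₁ s(v, x)) (g := fun y => c₂ s(v, y))
    (fun x hx hxA => hk₁ s(⟨v, hvA ((mem_neighborFinset ..).mp hx) hxA⟩, ⟨x, hxA⟩)
      ((mem_neighborFinset ..).mp hx))
    (fun y hy hyA => have hB := hvB ((mem_neighborFinset ..).mp hy) hyA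
      hk₂ s(⟨v, hB.2⟩, ⟨y, hB.1⟩) ((mem_neighborFinset ..).mp hy))
    (by rwa [neighborFinset, ← Set.ncard_eq_toFinset_card'])
  let c : Sym2 V → ℕ := fun e => if ∀ x ∈ e, x ∈ A then c₁ e else σ (c₂ e)
  have hcA {x y : V} (hx : x ∈ A) (hy : y ∈ A) : c s(x, y) = c₁ s(x, y) :=
    if_pos fun z hz => (Sym2.mem_iff.mp hz).elim (· ▸ hx) (· ▸ hy)
  have hcB {x y : V} (hxy : ¬(x ∈ A ∧ y ∈ A)) : c s(x, y) = σ (c₂ s(x, y)) :=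
    if_neg fun hall => hxy ⟨hall x (Sym2.mem_mk_left x y), hall y (Sym2.mem_mk_right x y)⟩
  have hnotA {x y : V} (hxy : G.Adj x y) (hx : x ∈ B) (hy : y ∈ B) : ¬(x ∈ A ∧ y ∈ A) :=
    fun hA => hxy.ne ((h.inter_subset ⟨hA.1, hx⟩).trans (h.inter_subset ⟨hA.2, hy⟩).symm)
  refine ⟨c, h.acyclicEdgeColoring (hc₁.congr fun e _ => ?_)
    ((hc₂.perm_comp σ).congr fun e he => ?_) fun x y hx hy hxA hyA => ?_, fun e he => ?_⟩
  · induction e using Sym2.ind with | _ x y => exact (hcA x.2 y.2).symm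
  · induction e using Sym2.ind with | _ x y => exact (hcB (hnotA he x.2 y.2)).symm
  · rw [hcA (hvA hx hxA) hxA, hcB fun h => hyA h.2]
    exact hσ x ((mem_neighborFinset ..).mpr hx) y ((mem_neighborFinset ..).mpr hy) hxA hyA
  · induction e using Sym2.ind with | _ x y =>
    by_cases hxy : x ∈ A ∧ y ∈ A
    · rw [hcA hxy.1 hxy.2]
      exact hk₁ s(⟨x, hxy.1⟩, ⟨y, hxy.2⟩) he
    · obtain ⟨hx, hy⟩ := (h.adj he).resolve_left hxy
      rw [hcB hxy]
      exact hσk _ (hk₂ s(⟨x, hx⟩, ⟨y, hy⟩) he)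

end IsSeparation

theorem isSeparation_insert_insert_compl {v : V} {C : Set V}
    (hC : ∀ ⦃x y⦄, G.Adj x y → x ≠ v → y ≠ v → x ∈ C → y ∈ C) :
    G.IsSeparation (insert v C) (insert v Cᶜ) v := by
  refine ⟨?_, ?_, fun x y hxy => ?_⟩
  · rw [← Set.insert_union_distrib, Set.union_compl_self, Set.insert_eq_of_mem (Set.mem_univ v)]
  · rw [← Set.insert_inter_distrib, Set.inter_compl_self]
    simp
  · by_cases hx : x = v <;> by_cases hy : y = v
    · exact absurd (hx.trans hy.symm) hxy.ne
    all_goals by_cases hxC : x ∈ C <;> by_cases hyC : y ∈ C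
    all_goals simp_all
    · exact hyC (hC hxy hx hy hxC)
    · exact hxC (hC hxy.symm hy hx hyC)

theorem exists_isSeparation_of_not_connected_induce [Nontrivial V] {v : V}
    (hv : ¬(G.induce {u | u ≠ v}).Connected) :
    ∃ A B : Set V, G.IsSeparation A B v ∧ A ≠ Set.univ ∧ B ≠ Set.univ := by
  have : Nonempty {u | u ≠ v} := nonempty_subtype.mpr (exists_ne v)
  have hpre : ¬(G.induce {u | u ≠ v}).Preconnected := fun hp =>
    hv ((connected_iff _).mpr ⟨hp, this⟩)
  simp only [Preconnected, not_forall] at hpre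
  obtain ⟨⟨a, ha⟩, ⟨b, hb⟩, hab⟩ := hpre
  let C : Set V := {x | ∃ hx : x ≠ v, (G.induce {u | u ≠ v}).Reachable ⟨a, ha⟩ ⟨x, hx⟩}
  refine ⟨insert v C, insert v Cᶜ, isSeparation_insert_insert_compl ?_, ?_, ?_⟩
  · rintro x y hxy hx hy ⟨_, hax⟩
    have hxy' : (G.induce {u | u ≠ v}).Adj ⟨x, hx⟩ ⟨y, hy⟩ := induce_adj.mpr hxy
    exact ⟨hy, hax.trans hxy'.reachable⟩
  · refine (Set.ne_univ_iff_exists_notMem _).mpr ⟨b, ?_⟩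
    rintro (rfl | ⟨_, hab'⟩)
    exacts [hb rfl, hab hab']
  · refine (Set.ne_univ_iff_exists_notMem _).mpr ⟨a, ?_⟩
    rintro (rfl | haC)
    exacts [ha rfl, haC ⟨ha, .rfl⟩]

theorem connected_of_forall_connected_induce_ne [Fintype V]
    (hV : 3 ≤ Fintype.card V) (h : ∀ v, (G.induce {u | u ≠ v}).Connected) : G.Connected := by
  classical
  have : Nonempty V := Fintype.card_pos_iff.mp (by omega)
  refine ⟨fun x y => ?_⟩
  obtain ⟨v, -, hv⟩ := exists_mem_notMem_of_card_lt_card (s := {x, y}) (t := univ)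
    ((card_le_two).trans_lt (by rw [card_univ]; omega))
  simp only [mem_insert, mem_singleton, not_or] at hv
  exact ((h v).preconnected ⟨x, Ne.symm hv.1⟩ ⟨y, Ne.symm hv.2⟩).map (Embedding.induce _).toHom

end SimpleGraph

theorem hasAcyclicEdgeColoring_induce_of_ne_univ {n K : ℕ} {G : SimpleGraph (Fin n)}
    (hplanar : Planar G)
    (hmin : ∀ m : ℕ, m < n → ∀ H : SimpleGraph (Fin m), Planar H →
      HasAcyclicEdgeColoring H (max (maxDeg H) K))
    {S : Set (Fin n)} (hS : S ≠ Set.univ) :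
    HasAcyclicEdgeColoring (G.induce S) (max (maxDeg G) K) := by
  classical
  obtain ⟨x, hx⟩ := (Set.ne_univ_iff_exists_notMem S).mp hS
  have hm : Fintype.card S < n := by simpa using Fintype.card_subtype_lt hx
  let φ := Iso.comap (Fintype.equivFin S).symm (G.induce S)
  have hφ : _ ↪g G := (Embedding.induce S).comp φ.toEmbedding
  exact ((hmin _ hm _ (hplanar.of_embedding hφ)).mono
    (max_le_max_right K (maxDeg_le_of_embedding hφ))).of_embedding φ.symm.toEmbedding

/-- A minimal counterexample to "every planar graph `G` satisfies
`χ'_a(G) ≤ max {Δ(G), 4.2·10¹⁴}`" must be 2-connected. -/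
theorem minimal_counterexample_two_connected {n : ℕ} (G : SimpleGraph (Fin n))
    (hplanar : Planar G)
    (hcex : ¬ HasAcyclicEdgeColoring G (max (maxDeg G) 420000000000000))
    (hmin : ∀ m : ℕ, m < n → ∀ H : SimpleGraph (Fin m), Planar H →
      HasAcyclicEdgeColoring H (max (maxDeg H) 420000000000000)) :
    G.Connected ∧ 3 ≤ n ∧ ∀ v : Fin n, (G.induce {u : Fin n | u ≠ v}).Connected := by
  have h3 : 3 ≤ n := by
    by_contra h
    exact hcex <|
      hasAcyclicEdgeColoring_of_card_le_two (by rw [Fintype.card_fin]; omega) (by positivity)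
  have hcut : ∀ v : Fin n, (G.induce {u : Fin n | u ≠ v}).Connected := by
    intro v
    by_contra hv
    have : Nontrivial (Fin n) := Fin.nontrivial_iff_two_le.mpr (by omega)
    obtain ⟨A, B, hsep, hA, hB⟩ := exists_isSeparation_of_not_connected_induce hv
    exact hcex <| hsep.hasAcyclicEdgeColoring
      (le_max_of_le_left (ncard_neighborSet_le_maxDeg G v))
      (hasAcyclicEdgeColoring_induce_of_ne_univ hplanar hmin hA)
      (hasAcyclicEdgeColoring_induce_of_ne_univ hplanar hmin hB)
  exact ⟨connected_of_forall_connected_induce_ne (by rwa [Fintype.card_fin]) hcut, h3, hcut⟩
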